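/- arXiv:1710.09865 — 2 statements merged into one kernel-verified Lean document; each statement's English description precedes it below -/
import Mathlib

section
/- For every a > 0 and every real s > 1, the series Z_a(s) = Σ_{(m,n) ∈ ℤ²∖{(0,0)}} (4π³m²/a + 4πa·n²)^{−s} converges, and (s−1)·Z_a(s) → 1/(4π) as s → 1⁺ (the spectral zeta function of the flat torus of area 1 has a simple pole at s = 1 with residue 1/(4π)). -/
open Real Filter Topology

/-- The eigenvalues `λ_{m,n} = 4π³m²/a + 4πa n²` of the positive Laplacian on the flat
rectangular torus `[−a,a] × [0,2π]` with metric `(1/(4πa)) g_{Eucl}` of area 1. -/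
noncomputable def lam (a : ℝ) (p : ℤ × ℤ) : ℝ :=
  4 * π ^ 3 * (p.1 : ℝ) ^ 2 / a + 4 * π * a * (p.2 : ℝ) ^ 2

/-- The spectral zeta function `Z_a(s) = Σ_{(m,n) ≠ (0,0)} λ_{m,n}^{−s}`. -/
noncomputable def Za (a s : ℝ) : ℝ :=
  ∑' p : {p : ℤ × ℤ // p ≠ 0}, lam a p.1 ^ (-s)

/-!
Write `λ_{m,n} = c₁ m² + c₂ n²` with `c₁ = 4π³/a`, `c₂ = 4πa`, and sum each row `m` over `n` first.
For `m ≠ 0` the row is an even function of `n`, decreasing in `|n|`, so the integral test puts it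
within `(c₁ m²)^{-s}` of `∫_ℝ (c₁ m² + c₂ y²)^{-s} dy = K(s) |m|^{1-2s}`, where
`K(s) = 2 C(s) c₁^{1/2-s} / √c₂` and `C(s) = ∫_0^∞ (1 + y²)^{-s} dy → π/2`.
Summing over `m` gives `Z_a(s) = K(s) ∑_{m≠0} |m|^{1-2s} + O(∑_{m≠0} |m|^{-2s})`; the first sum is
`2ζ(2s-1) ~ 1/(s-1)` while the second stays bounded, so `(s-1) Z_a(s) → K(1) = π/√(c₁c₂) = 1/(4π)`.
-/

section

open Set MeasureTheory

theorem summable_int_and_abs_tsum_sub_integral_le {g : ℝ → ℝ} (heven : g.Even)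
    (anti : AntitoneOn g (Ici 0)) (integrable : IntegrableOn g (Ioi 0))
    (nonneg : ∀ t ∈ Ioi 0, 0 ≤ g t) :
    Summable (fun n : ℤ => g n) ∧ |∑' n : ℤ, g n - 2 * ∫ x in Ioi 0, g x| ≤ g 0 := by
  have hnat := anti.summable_of_integrableOn_Ioi_zero integrable nonneg
  have hint : Summable (fun n : ℤ => g n) :=
    summable_int_iff_summable_nat_and_neg.mpr ⟨hnat, by simpa [heven _] using hnat⟩
  have hfold : ∑' n : ℤ, g n = 2 * ∑' n : ℕ, g n - g 0 := by
    have := tsum_nat_add_neg hint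
    simp only [Int.cast_neg, Int.cast_natCast, heven _, ← two_mul, tsum_mul_left,
      Int.cast_zero] at this
    linarith
  have hlow := anti.integral_le_tsum hnat nonneg
  have hupp := anti.tsum_le_integral integrable nonneg
  exact ⟨hint, abs_le.mpr ⟨by linarith, by linarith⟩⟩

theorem add_mul_sq_rpow_neg_eq {A B : ℝ} (hA : 0 < A) (hB : 0 < B) (s y : ℝ) :
    (A + B * y ^ 2) ^ (-s) = A ^ (-s) * (1 + (√(B / A) * y) ^ 2) ^ (-s) := by
  rw [← mul_rpow hA.le (by positivity), mul_pow, sq_sqrt (by positivity)]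
  congr 1
  field_simp

theorem integrable_one_add_sq_rpow_neg {s : ℝ} (hs : 1 / 2 < s) :
    Integrable (fun y : ℝ => (1 + y ^ 2) ^ (-s)) := by
  have := integrable_rpow_neg_one_add_norm_sq (E := ℝ) (μ := volume) (r := 2 * s)
    (by simp only [Module.finrank_self, Nat.cast_one]; linarith)
  simpa [neg_div, mul_div_cancel_left₀] using this

theorem integrable_add_mul_sq_rpow_neg {A B s : ℝ} (hA : 0 < A) (hB : 0 < B) (hs : 1 / 2 < s) :
    Integrable (fun y : ℝ => (A + B * y ^ 2) ^ (-s)) := by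
  simp_rw [add_mul_sq_rpow_neg_eq hA hB]
  exact ((integrable_one_add_sq_rpow_neg hs).comp_mul_left'
    (sqrt_pos.mpr (div_pos hB hA)).ne').const_mul _

theorem integral_Ioi_add_mul_sq_rpow_neg {A B : ℝ} (hA : 0 < A) (hB : 0 < B) (s : ℝ) :
    ∫ y in Ioi 0, (A + B * y ^ 2) ^ (-s)
      = A ^ (1 / 2 - s) / √B * ∫ y in Ioi 0, (1 + y ^ 2) ^ (-s) := by
  simp_rw [add_mul_sq_rpow_neg_eq hA hB]
  rw [integral_const_mul, integral_comp_mul_left_Ioi (fun y => (1 + y ^ 2) ^ (-s)) 0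
    (sqrt_pos.mpr (div_pos hB hA)), mul_zero, smul_eq_mul, ← mul_assoc]
  congr 1
  rw [sqrt_div hB.le, inv_div, sqrt_eq_rpow, sub_eq_neg_add, rpow_add hA]
  ring

theorem tendsto_integral_Ioi_one_add_sq_rpow_neg :
    Tendsto (fun s : ℝ => ∫ y in Ioi 0, (1 + y ^ 2) ^ (-s)) (𝓝[>] 1) (𝓝 (π / 2)) := by
  have hlim : π / 2 = ∫ y in Ioi (0 : ℝ), (1 + y ^ 2) ^ (-1 : ℝ) := by
    simp [rpow_neg_one]
  rw [hlim]
  refine tendsto_integral_filter_of_dominated_convergence _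
    (.of_forall fun s => ((by fun_prop : Continuous fun y : ℝ => 1 + y ^ 2).rpow_const
      fun y => .inl (by positivity)).aestronglyMeasurable) ?_
    (integrable_one_add_sq_rpow_neg (s := 1) (by norm_num)).integrableOn (.of_forall fun y => ?_)
  · filter_upwards [self_mem_nhdsWithin] with s (hs : 1 < s)
    refine .of_forall fun y => ?_
    rw [norm_of_nonneg (by positivity)]
    exact rpow_le_rpow_of_exponent_le (by nlinarith [sq_nonneg y]) (by linarith)
  · exact (((continuous_const_rpow (by positivity)).comp continuous_neg).tendsto 1).mono_left
      nhdsWithin_le_nhds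

theorem summable_and_abs_tsum_int_add_mul_sq_sub_le {A B s : ℝ} (hA : 0 < A) (hB : 0 < B)
    (hs : 1 / 2 < s) :
    Summable (fun n : ℤ => (A + B * n ^ 2) ^ (-s)) ∧
      |∑' n : ℤ, (A + B * n ^ 2) ^ (-s)
        - 2 * (∫ y in Ioi 0, (1 + y ^ 2) ^ (-s)) / √B * A ^ (1 / 2 - s)| ≤ A ^ (-s) := by
  have hanti : AntitoneOn (fun y : ℝ => (A + B * y ^ 2) ^ (-s)) (Ici 0) := by
    intro x (hx : 0 ≤ x) y _ hxy
    exact rpow_le_rpow_of_nonpos (by positivity) (by gcongr) (by linarith)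
  have key := summable_int_and_abs_tsum_sub_integral_le (fun y => by simp) hanti
    (integrable_add_mul_sq_rpow_neg hA hB hs).integrableOn (fun t _ => by positivity)
  rw [integral_Ioi_add_mul_sq_rpow_neg hA hB] at key
  obtain ⟨hsum, hbound⟩ := key
  refine ⟨hsum, ?_⟩
  convert hbound using 3
  · ring
  · simp

/-- `2 ζ(2u)`: the `n = 0` term is `0 ^ (-u) = 0` for `u ≠ 0`. -/
noncomputable def zetaInt (u : ℝ) : ℝ := ∑' n : ℤ, ((n : ℝ) ^ 2) ^ (-u)

theorem sq_rpow_neg_eq_one_div (x u : ℝ) : (x ^ 2) ^ (-u) = 1 / |x| ^ (2 * u) := by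
  rw [← sq_abs, ← rpow_natCast_mul (abs_nonneg x), mul_neg, rpow_neg (abs_nonneg x), one_div]
  norm_num

theorem summable_int_sq_rpow_neg {u : ℝ} (hu : 1 / 2 < u) :
    Summable (fun n : ℤ => ((n : ℝ) ^ 2) ^ (-u)) := by
  have := summable_abs_int_rpow (b := 2 * u) (by linarith)
  refine this.congr fun n => ?_
  rw [sq_rpow_neg_eq_one_div, rpow_neg (abs_nonneg _), one_div]

theorem zetaInt_eq_two_mul_tsum {u : ℝ} (hu : 1 / 2 < u) :
    zetaInt u = 2 * ∑' n : ℕ, 1 / (n : ℝ) ^ (2 * u) := by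
  have := tsum_nat_add_neg (summable_int_sq_rpow_neg hu)
  simp only [sq_rpow_neg_eq_one_div, Int.cast_neg, Int.cast_natCast, abs_neg, Nat.abs_cast,
    ← two_mul, tsum_mul_left, Int.cast_zero, abs_zero,
    zero_rpow (by linarith : 2 * u ≠ 0), div_zero, add_zero] at this
  rw [this, zetaInt]
  exact tsum_congr fun n => sq_rpow_neg_eq_one_div _ _

theorem zetaInt_le_zetaInt_one {u : ℝ} (hu : 1 ≤ u) : zetaInt u ≤ zetaInt 1 := by
  refine (summable_int_sq_rpow_neg (by linarith)).tsum_le_tsum (fun n => ?_)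
    (summable_int_sq_rpow_neg (by norm_num))
  rcases eq_or_ne n 0 with rfl | hn
  · simp [zero_rpow (by linarith : -u ≠ 0)]
  · have : (1 : ℝ) ≤ (n : ℝ) ^ 2 := by
      have : (1 : ℤ) ≤ n ^ 2 := by nlinarith [Int.one_le_abs hn, sq_abs n]
      exact_mod_cast this
    exact rpow_le_rpow_of_exponent_le this (by linarith)

theorem tendsto_sub_one_mul_zetaInt_sub_half :
    Tendsto (fun s : ℝ => (s - 1) * zetaInt (s - 1 / 2)) (𝓝[>] 1) (𝓝 1) := by
  have hmap : Tendsto (fun s : ℝ => 2 * s - 1) (𝓝[>] 1) (𝓝[>] 1) := by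
    refine tendsto_nhdsWithin_iff.mpr ⟨?_, ?_⟩
    · exact ((by fun_prop : Continuous fun s : ℝ => 2 * s - 1).tendsto' 1 1
        (by norm_num)).mono_left nhdsWithin_le_nhds
    · filter_upwards [self_mem_nhdsWithin] with s (hs : 1 < s)
      show 1 < 2 * s - 1
      linarith
  refine (tendsto_sub_mul_tsum_nat_rpow.comp hmap).congr' ?_
  filter_upwards [self_mem_nhdsWithin] with s (hs : 1 < s)
  rw [Function.comp_apply, zetaInt_eq_two_mul_tsum (by linarith)]
  ring_nf

theorem tendsto_sub_one_mul_zetaInt :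
    Tendsto (fun s : ℝ => (s - 1) * zetaInt s) (𝓝[>] 1) (𝓝 0) := by
  have hsub : Tendsto (fun s : ℝ => (s - 1) * zetaInt 1) (𝓝[>] 1) (𝓝 0) := by
    have : Tendsto (fun s : ℝ => s - 1) (𝓝[>] 1) (𝓝 0) :=
      tendsto_sub_nhds_zero_iff.mpr (tendsto_id.mono_left nhdsWithin_le_nhds)
    simpa using this.mul_const (zetaInt 1)
  refine squeeze_zero' ?_ ?_ hsub
  all_goals filter_upwards [self_mem_nhdsWithin] with s (hs : 1 < s)
  · exact mul_nonneg (by linarith) (tsum_nonneg fun n => by positivity)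
  · exact mul_le_mul_of_nonneg_left (zetaInt_le_zetaInt_one hs.le) (by linarith)

section DiagonalForm

variable {c₁ c₂ s : ℝ}

theorem summable_and_abs_tsum_row_sub_le (hc₁ : 0 < c₁) (hc₂ : 0 < c₂) (hs : 1 / 2 < s)
    (m : ℤ) :
    Summable (fun n : ℤ => (c₁ * m ^ 2 + c₂ * n ^ 2) ^ (-s)) ∧
      |∑' n : ℤ, (c₁ * m ^ 2 + c₂ * n ^ 2) ^ (-s)
          - 2 * (∫ y in Ioi 0, (1 + y ^ 2) ^ (-s)) / √c₂ * c₁ ^ (1 / 2 - s)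
            * ((m : ℝ) ^ 2) ^ (1 / 2 - s)|
        ≤ c₁ ^ (-s) * ((m : ℝ) ^ 2) ^ (-s) + if m = 0 then c₂ ^ (-s) * zetaInt s else 0 := by
  rcases eq_or_ne m 0 with rfl | hm
  · have hrow : ∀ n : ℤ, (c₁ * ((0 : ℤ) : ℝ) ^ 2 + c₂ * n ^ 2) ^ (-s)
        = c₂ ^ (-s) * ((n : ℝ) ^ 2) ^ (-s) := fun n => by
      rw [Int.cast_zero, zero_pow two_ne_zero, mul_zero, zero_add,
        mul_rpow hc₂.le (sq_nonneg _)]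
    simp only [hrow, tsum_mul_left]
    refine ⟨(summable_int_sq_rpow_neg hs).mul_left _, ?_⟩
    rw [Int.cast_zero, zero_pow two_ne_zero, zero_rpow (by linarith : 1 / 2 - s ≠ 0),
      zero_rpow (by linarith : -s ≠ 0), mul_zero, sub_zero, mul_zero, zero_add, if_pos trivial,
      abs_of_nonneg (by positivity), zetaInt]
  · obtain ⟨hsum, hbound⟩ := summable_and_abs_tsum_int_add_mul_sq_sub_le (A := c₁ * m ^ 2)
      (by positivity) hc₂ hs
    refine ⟨hsum, ?_⟩
    rwa [if_neg hm, add_zero, ← mul_rpow hc₁.le (sq_nonneg _), mul_assoc _ (c₁ ^ _),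
      ← mul_rpow hc₁.le (sq_nonneg _)]

theorem summable_and_abs_tsum_diag_sub_le (hc₁ : 0 < c₁) (hc₂ : 0 < c₂) (hs : 1 < s) :
    Summable (fun p : ℤ × ℤ => (c₁ * p.1 ^ 2 + c₂ * p.2 ^ 2) ^ (-s)) ∧
      |∑' p : ℤ × ℤ, (c₁ * p.1 ^ 2 + c₂ * p.2 ^ 2) ^ (-s)
          - 2 * (∫ y in Ioi 0, (1 + y ^ 2) ^ (-s)) / √c₂ * c₁ ^ (1 / 2 - s)
            * zetaInt (s - 1 / 2)|
        ≤ (c₁ ^ (-s) + c₂ ^ (-s)) * zetaInt s := by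
  set K := 2 * (∫ y in Ioi 0, (1 + y ^ 2) ^ (-s)) / √c₂ * c₁ ^ (1 / 2 - s)
  have hrow := summable_and_abs_tsum_row_sub_le hc₁ hc₂ (s := s) (by linarith)
  have hmain :
      HasSum (fun m : ℤ => K * ((m : ℝ) ^ 2) ^ (1 / 2 - s)) (K * zetaInt (s - 1 / 2)) := by
    simpa only [zetaInt, neg_sub] using
      ((summable_int_sq_rpow_neg (u := s - 1 / 2) (by linarith)).hasSum).mul_left K
  have herr : HasSum (fun m : ℤ => c₁ ^ (-s) * ((m : ℝ) ^ 2) ^ (-s)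
      + if m = 0 then c₂ ^ (-s) * zetaInt s else 0) ((c₁ ^ (-s) + c₂ ^ (-s)) * zetaInt s) := by
    rw [add_mul]
    exact ((summable_int_sq_rpow_neg (by linarith)).hasSum.mul_left _).add (hasSum_ite_eq 0 _)
  have hdiff : Summable fun m : ℤ => ∑' n : ℤ, (c₁ * m ^ 2 + c₂ * n ^ 2) ^ (-s)
      - K * ((m : ℝ) ^ 2) ^ (1 / 2 - s) := herr.summable.of_norm_bounded fun m => (hrow m).2
  have hR := (hdiff.add hmain.summable).congr fun m => sub_add_cancel _ _
  have hsum : Summable fun p : ℤ × ℤ => (c₁ * p.1 ^ 2 + c₂ * p.2 ^ 2) ^ (-s) :=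
    (summable_prod_of_nonneg fun p => by positivity).mpr ⟨fun m => (hrow m).1, hR⟩
  refine ⟨hsum, ?_⟩
  calc _ = |∑' m : ℤ, (∑' n : ℤ, (c₁ * m ^ 2 + c₂ * n ^ 2) ^ (-s)
            - K * ((m : ℝ) ^ 2) ^ (1 / 2 - s))| := by
        rw [hsum.tsum_prod' fun m => (hrow m).1, ← hmain.tsum_eq, hR.tsum_sub hmain.summable]
    _ ≤ _ := norm_tsum_le_tsum_norm hdiff.norm
    _ ≤ _ := hdiff.norm.tsum_le_tsum (fun m => (hrow m).2) herr.summable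
    _ = _ := herr.tsum_eq

theorem tendsto_sub_one_mul_tsum_diag_rpow_neg (hc₁ : 0 < c₁) (hc₂ : 0 < c₂) :
    Tendsto (fun s : ℝ => (s - 1) * ∑' p : ℤ × ℤ, (c₁ * p.1 ^ 2 + c₂ * p.2 ^ 2) ^ (-s))
      (𝓝[>] 1) (𝓝 (π / √(c₁ * c₂))) := by
  have hK : Tendsto
      (fun s : ℝ => 2 * (∫ y in Ioi 0, (1 + y ^ 2) ^ (-s)) / √c₂ * c₁ ^ (1 / 2 - s)) (𝓝[>] 1)
      (𝓝 (π / √(c₁ * c₂))) := by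
    have hpow : Continuous fun s : ℝ => c₁ ^ (1 / 2 - s) := by fun_prop (disch := positivity)
    convert ((tendsto_integral_Ioi_one_add_sq_rpow_neg.const_mul 2).div_const √c₂).mul
      ((hpow.tendsto 1).mono_left nhdsWithin_le_nhds) using 2
    rw [sqrt_mul hc₁.le, show (1 / 2 - 1 : ℝ) = -(1 / 2) by norm_num, rpow_neg hc₁.le,
      ← sqrt_eq_rpow]
    field_simp
  have hcoef : Continuous fun s : ℝ => c₁ ^ (-s) + c₂ ^ (-s) := by fun_prop (disch := positivity)
  have hmain := hK.mul tendsto_sub_one_mul_zetaInt_sub_half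
  have herr := ((hcoef.tendsto 1).mono_left nhdsWithin_le_nhds).mul tendsto_sub_one_mul_zetaInt
  rw [mul_one] at hmain
  rw [mul_zero] at herr
  refine hmain.congr_dist (squeeze_zero' (.of_forall fun s => dist_nonneg) ?_ herr)
  filter_upwards [self_mem_nhdsWithin] with s (hs : 1 < s)
  have hs₀ : 0 < s - 1 := sub_pos.mpr hs
  rw [dist_comm, dist_eq_norm, norm_eq_abs]
  calc _ = |(s - 1) * (∑' p : ℤ × ℤ, (c₁ * p.1 ^ 2 + c₂ * p.2 ^ 2) ^ (-s)
          - 2 * (∫ y in Ioi 0, (1 + y ^ 2) ^ (-s)) / √c₂ * c₁ ^ (1 / 2 - s)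
            * zetaInt (s - 1 / 2))| := by
        congr 1
        ring
    _ ≤ (s - 1) * ((c₁ ^ (-s) + c₂ ^ (-s)) * zetaInt s) := by
        rw [abs_mul, abs_of_pos hs₀]
        exact mul_le_mul_of_nonneg_left (summable_and_abs_tsum_diag_sub_le hc₁ hc₂ hs).2 hs₀.le
    _ = _ := by ring

end DiagonalForm

end

/-- For every `a > 0` and real `s > 1` the spectral zeta series of the flat torus of area 1
converges, and `(s−1)·Z_a(s) → 1/(4π)` as `s → 1⁺`: the zeta function has a simple pole at
`s = 1` with residue `1/(4π)`. -/
theorem torus_zeta_pole (a : ℝ) (ha : 0 < a) :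
    (∀ s : ℝ, 1 < s → Summable (fun p : {p : ℤ × ℤ // p ≠ 0} => lam a p.1 ^ (-s))) ∧
      Tendsto (fun s : ℝ => (s - 1) * Za a s) (𝓝[>] 1) (𝓝 (1 / (4 * π))) := by
  set c₁ := 4 * π ^ 3 / a with hc₁_def
  set c₂ := 4 * π * a with hc₂_def
  have hc₁ : 0 < c₁ := by positivity
  have hc₂ : 0 < c₂ := by positivity
  have hlam : lam a = fun p : ℤ × ℤ => c₁ * p.1 ^ 2 + c₂ * p.2 ^ 2 := by
    ext p
    rw [lam, hc₁_def, hc₂_def]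
    ring
  have hZa : ∀ s, 1 < s → Za a s = ∑' p : ℤ × ℤ, (c₁ * p.1 ^ 2 + c₂ * p.2 ^ 2) ^ (-s) := by
    intro s hs
    simp only [Za, hlam]
    refine tsum_subtype_eq_of_support_subset (s := {p : ℤ × ℤ | p ≠ 0})
      (f := fun p : ℤ × ℤ => (c₁ * p.1 ^ 2 + c₂ * p.2 ^ 2) ^ (-s)) fun p hp h0 => hp ?_
    simp [h0, zero_rpow (by linarith : -s ≠ 0)]
  have hres : π / √(c₁ * c₂) = 1 / (4 * π) := by
    rw [show c₁ * c₂ = (4 * π ^ 2) ^ 2 by rw [hc₁_def, hc₂_def]; field_simp,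
      sqrt_sq (by positivity)]
    field_simp
  rw [hlam, ← hres]
  refine ⟨fun s hs => (summable_and_abs_tsum_diag_sub_le hc₁ hc₂ hs).1.subtype _, ?_⟩
  refine (tendsto_sub_one_mul_tsum_diag_rpow_neg hc₁ hc₂).congr' ?_
  filter_upwards [self_mem_nhdsWithin] with s (hs : 1 < s)
  rw [hZa s hs]
end

section
/- For every a > 0 there exists a real number Z̃_a such that Z_a(s) − 1/(4π(s−1)) → Z̃_a as s → 1⁺ (the regularized trace of the inverse Laplacian of the flat torus), and moreover Z̃_a/a → 1/(12π) as a → ∞; that is, for the long-skinny flat rectangular torus of area 1, the regularized trace has leading asymptotic behavior Z̃_a ∼ a/(12π). -/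
open Real Filter Topology

namespace TRT

open Set MeasureTheory

/-! ### Definitions -/

noncomputable def K (s : ℝ) : ℝ := ∫ u in Ioi (0:ℝ), (1 + u ^ 2) ^ (-s)

noncomputable def KD : ℝ := ∫ u in Ioi (0:ℝ), -Real.log (1+u^2) * (1+u^2)^(-(1:ℝ))

noncomputable def zR (σ : ℝ) : ℝ := ∑' n : ℕ, ((n : ℝ) + 1) ^ (-σ)

noncomputable def inn (a s : ℝ) (n : ℕ) : ℝ :=
  ∑' m : ℕ, (((n : ℝ) + 1) ^ 2 + (((m : ℝ) + 1) * (π / a)) ^ 2) ^ (-s)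

noncomputable def eps (a s : ℝ) (n : ℕ) : ℝ :=
  (a / π) * (((n : ℝ) + 1) ^ (1 - 2*s) * K s) - inn a s n

noncomputable def Ea (a s : ℝ) : ℝ := ∑' n : ℕ, eps a s n

/-! ### Elementary helpers -/

lemma continuous_const_rpow {c : ℝ} (hc : 0 < c) : Continuous fun s : ℝ => c ^ s := by
  simp only [Real.rpow_def_of_pos hc]
  exact Real.continuous_exp.comp (continuous_const.mul continuous_id)

lemma tendsto_c_rpow_neg {c : ℝ} (hc : 0 < c) :
    Tendsto (fun s : ℝ => c ^ (-s)) (𝓝[>] 1) (𝓝 (c ^ (-1:ℝ))) := by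
  have h := ((continuous_const_rpow hc).comp continuous_neg).tendsto 1
  exact h.mono_left nhdsWithin_le_nhds

lemma rpow_neg_anti {x y s : ℝ} (hx : 0 < x) (hxy : x ≤ y) (hs : 0 ≤ s) :
    y ^ (-s) ≤ x ^ (-s) :=
  Real.rpow_le_rpow_of_nonpos hx hxy (neg_nonpos.mpr hs)

lemma sq_rpow {x : ℝ} (hx : 0 ≤ x) (s : ℝ) : (x ^ 2) ^ (-s) = x ^ (-(2*s)) := by
  rw [← Real.rpow_natCast x 2, ← Real.rpow_mul hx]
  norm_num

lemma split_rpow {c x : ℝ} (hc : 0 ≤ c) (hx : 0 ≤ x) (s : ℝ) :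
    (c * x ^ 2) ^ (-s) = c ^ (-s) * x ^ (-(2*s)) := by
  rw [Real.mul_rpow hc (by positivity), sq_rpow hx]

lemma summable_shift {σ : ℝ} (hσ : 1 < σ) : Summable fun n : ℕ => ((n:ℝ)+1) ^ (-σ) := by
  have := (Real.summable_nat_rpow (p := -σ)).mpr (by linarith)
  have h2 := (summable_nat_add_iff (f := fun n : ℕ => (n:ℝ) ^ (-σ)) 1).mpr this
  refine h2.congr fun n => ?_
  push_cast
  ring_nf

lemma zR_two : zR 2 = π ^ 2 / 6 := by
  have h0 : HasSum (fun n : ℕ => (1:ℝ) / ((n + 1 : ℕ) : ℝ) ^ 2) (π ^ 2 / 6) := by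
    rw [hasSum_nat_add_iff (f := fun n : ℕ => (1:ℝ) / (n : ℝ) ^ 2) 1]
    simpa using hasSum_zeta_two
  have h1 : HasSum (fun n : ℕ => ((n:ℝ)+1) ^ (-(2:ℝ))) (π ^ 2 / 6) := by
    have e : (fun n : ℕ => (1:ℝ) / ((n + 1 : ℕ) : ℝ) ^ 2)
        = fun n : ℕ => ((n:ℝ)+1) ^ (-(2:ℝ)) := by
      funext n
      rw [Real.rpow_neg (by positivity), Real.rpow_two]
      push_cast
      rw [one_div]
    rwa [e] at h0
  exact h1.tsum_eq

/-! ### The integral `K` -/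

lemma integrableOn_K {s : ℝ} (hs : 1 ≤ s) :
    IntegrableOn (fun u : ℝ => (1 + u ^ 2) ^ (-s)) (Ioi 0) := by
  have hmeas : AEStronglyMeasurable (fun u : ℝ => (1 + u ^ 2) ^ (-s))
      (volume.restrict (Ioi (0:ℝ))) := by
    apply Continuous.aestronglyMeasurable
    apply Continuous.rpow_const (by continuity)
    intro x; left; positivity
  refine (integrable_inv_one_add_sq.integrableOn).mono' hmeas ?_
  filter_upwards with u
  have h1 : (0:ℝ) < 1 + u ^ 2 := by positivity
  rw [Real.norm_eq_abs, abs_of_nonneg (Real.rpow_nonneg h1.le _)]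
  calc (1 + u ^ 2) ^ (-s) ≤ (1 + u ^ 2) ^ (-1 : ℝ) := by
        apply Real.rpow_le_rpow_of_exponent_le (by nlinarith) (by linarith)
    _ = (1 + u ^ 2)⁻¹ := by rw [Real.rpow_neg_one]

lemma K_one : K 1 = π / 2 := by
  have : K 1 = ∫ u in Ioi (0:ℝ), (1 + u ^ 2)⁻¹ := by
    refine setIntegral_congr_fun measurableSet_Ioi fun u _ => ?_
    rw [Real.rpow_neg_one]
  rw [this, integral_Ioi_inv_one_add_sq, arctan_zero, sub_zero]

lemma K_nonneg (s : ℝ) : 0 ≤ K s :=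
  setIntegral_nonneg measurableSet_Ioi fun u _ => Real.rpow_nonneg (by positivity) _

lemma K_cont : Tendsto K (𝓝[>] 1) (𝓝 (K 1)) := by
  apply MeasureTheory.tendsto_integral_filter_of_dominated_convergence
    (bound := fun u : ℝ => (1+u^2)^(-(1:ℝ)))
  · filter_upwards with s
    apply Continuous.aestronglyMeasurable
    apply Continuous.rpow_const (by continuity)
    intro x; left; positivity
  · filter_upwards [self_mem_nhdsWithin] with s hs
    filter_upwards with u
    have hs1 : (1:ℝ) < s := hs
    have h1 : (0:ℝ) < 1 + u ^ 2 := by positivity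
    rw [Real.norm_eq_abs, abs_of_nonneg (Real.rpow_nonneg h1.le _)]
    apply Real.rpow_le_rpow_of_exponent_le (by nlinarith) (by linarith)
  · exact integrableOn_K le_rfl
  · filter_upwards with u
    exact tendsto_c_rpow_neg (by positivity)

lemma log_le_four_rpow {w : ℝ} (hw : 1 ≤ w) : Real.log w ≤ 4 * w ^ ((1:ℝ)/4) := by
  have hw0 : (0:ℝ) < w := by linarith
  have h1 : Real.log (w ^ ((1:ℝ)/4)) = (1/4) * Real.log w := Real.log_rpow hw0 _
  have h2 : Real.log (w ^ ((1:ℝ)/4)) ≤ w ^ ((1:ℝ)/4) - 1 :=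
    Real.log_le_sub_one_of_pos (Real.rpow_pos_of_pos hw0 _)
  nlinarith [Real.rpow_nonneg hw0.le ((1:ℝ)/4)]

lemma integrableOn_L :
    IntegrableOn (fun u : ℝ => Real.log (1+u^2) * (1+u^2)^(-(1:ℝ))) (Ioi 0) := by
  have hcont : Continuous (fun u : ℝ => Real.log (1+u^2) * (1+u^2)^(-(1:ℝ))) := by
    apply Continuous.mul
    · exact Continuous.log (by continuity) (fun x => by positivity)
    · apply Continuous.rpow_const (by continuity)
      intro x; left; positivity
  have hnonneg : ∀ u : ℝ, 0 ≤ Real.log (1+u^2) * (1+u^2)^(-(1:ℝ)) := by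
    intro u
    apply mul_nonneg (Real.log_nonneg (by nlinarith [sq_nonneg u]))
      (Real.rpow_nonneg (by positivity) _)
  rw [show Ioi (0:ℝ) = Ioc 0 1 ∪ Ioi 1 from (Ioc_union_Ioi_eq_Ioi zero_le_one).symm]
  apply IntegrableOn.union
  · exact hcont.integrableOn_Ioc
  · have hInt : IntegrableOn (fun x : ℝ => 4 * x ^ (-(3/2):ℝ)) (Ioi 1) :=
      (integrableOn_Ioi_rpow_of_lt (by norm_num) one_pos).const_mul 4
    refine hInt.mono' hcont.aestronglyMeasurable ?_
    rw [ae_restrict_iff' measurableSet_Ioi]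
    filter_upwards with u hu
    have hu1 : (1:ℝ) < u := hu
    have hw : (1:ℝ) ≤ 1 + u^2 := by nlinarith
    have hw0 : (0:ℝ) < 1 + u^2 := by positivity
    rw [Real.norm_eq_abs, abs_of_nonneg (hnonneg u)]
    have h1 : Real.log (1+u^2) * (1+u^2)^(-(1:ℝ))
        ≤ 4 * (1+u^2) ^ ((1:ℝ)/4) * (1+u^2)^(-(1:ℝ)) := by
      apply mul_le_mul_of_nonneg_right (log_le_four_rpow hw) (Real.rpow_nonneg hw0.le _)
    refine h1.trans ?_
    rw [mul_assoc, ← Real.rpow_add hw0,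
      show ((1:ℝ)/4 + -1 : ℝ) = -(3/4) by norm_num]
    apply mul_le_mul_of_nonneg_left _ (by norm_num)
    calc (1+u^2) ^ (-(3/4):ℝ) ≤ (u^2) ^ (-(3/4):ℝ) :=
          Real.rpow_le_rpow_of_nonpos (by positivity) (by nlinarith) (by norm_num)
      _ = u ^ (-(3/2):ℝ) := by
          rw [← Real.rpow_natCast u 2, ← Real.rpow_mul (by linarith)]
          norm_num

lemma rpow_slope {c : ℝ} (hc : 0 < c) :
    Tendsto (fun s : ℝ => (c ^ (-s) - c ^ (-1:ℝ))/(s-1)) (𝓝[>] 1)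
      (𝓝 (-Real.log c * c ^ (-1:ℝ))) := by
  have hf : (fun s : ℝ => c ^ (-s)) = fun s : ℝ => Real.exp (-(s * Real.log c)) := by
    funext s
    rw [Real.rpow_def_of_pos hc]
    ring_nf
  have hd : HasDerivAt (fun s : ℝ => c ^ (-s)) (-Real.log c * c ^ (-1:ℝ)) 1 := by
    rw [hf]
    have h1 : HasDerivAt (fun s : ℝ => -(s * Real.log c)) (-Real.log c) 1 := by
      have h := ((hasDerivAt_id (1:ℝ)).mul_const (Real.log c)).neg
      rw [one_mul] at h
      exact h
    have := h1.exp
    convert this using 1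
    rw [Real.rpow_def_of_pos hc]
    ring_nf
  have hslope := hasDerivAt_iff_tendsto_slope.mp hd
  have hmono : (𝓝[>] (1:ℝ)) ≤ (𝓝[≠] (1:ℝ)) :=
    nhdsWithin_mono _ fun x hx => ne_of_gt hx
  refine (hslope.mono_left hmono).congr fun s => ?_
  rw [slope_def_field]

lemma K_slope : Tendsto (fun s : ℝ => (K s - K 1)/(s-1)) (𝓝[>] 1) (𝓝 KD) := by
  have hmain : Tendsto (fun s : ℝ => ∫ u in Ioi (0:ℝ),
      ((1+u^2)^(-s) - (1+u^2)^(-(1:ℝ)))/(s-1)) (𝓝[>] 1) (𝓝 KD) := by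
    apply MeasureTheory.tendsto_integral_filter_of_dominated_convergence
      (bound := fun u : ℝ => Real.log (1+u^2) * (1+u^2)^(-(1:ℝ)))
    · filter_upwards with s
      apply Continuous.aestronglyMeasurable
      apply Continuous.div_const
      apply Continuous.sub
      · apply Continuous.rpow_const (by continuity)
        intro x; left; positivity
      · apply Continuous.rpow_const (by continuity)
        intro x; left; positivity
    · filter_upwards [self_mem_nhdsWithin] with s hs
      filter_upwards with u
      have hs1 : (1:ℝ) < s := hs
      set c : ℝ := 1 + u^2 with hc_def
      have hc1 : (1:ℝ) ≤ c := by nlinarith [sq_nonneg u]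
      have hc0 : (0:ℝ) < c := by linarith
      have hle : c ^ (-s) ≤ c ^ (-1:ℝ) :=
        Real.rpow_le_rpow_of_exponent_le hc1 (by linarith)
      have hkey : c ^ (-1:ℝ) - c ^ (-s) ≤ (s-1) * (Real.log c * c ^ (-1:ℝ)) := by
        have he : c ^ ((1:ℝ)-s) = Real.exp ((1-s) * Real.log c) := by
          rw [Real.rpow_def_of_pos hc0]; ring_nf
        have hexp : 1 + (1-s) * Real.log c ≤ c ^ ((1:ℝ)-s) := by
          rw [he]
          have := Real.add_one_le_exp ((1-s) * Real.log c)
          linarith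
        have hsplit : c ^ (-s) = c ^ (-1:ℝ) * c ^ ((1:ℝ)-s) := by
          rw [← Real.rpow_add hc0]; congr 1; ring
        have hpos : 0 ≤ c ^ (-1:ℝ) := Real.rpow_nonneg hc0.le _
        calc c ^ (-1:ℝ) - c ^ (-s) = c ^ (-1:ℝ) * (1 - c ^ ((1:ℝ)-s)) := by
              rw [hsplit]; ring
          _ ≤ c ^ (-1:ℝ) * ((s-1) * Real.log c) := by
              apply mul_le_mul_of_nonneg_left _ hpos
              nlinarith [hexp]
          _ = (s-1) * (Real.log c * c ^ (-1:ℝ)) := by ring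
      rw [Real.norm_eq_abs, abs_of_nonpos (by
        apply div_nonpos_of_nonpos_of_nonneg (by linarith) (by linarith))]
      rw [← neg_div, div_le_iff₀ (by linarith : (0:ℝ) < s - 1)]
      calc -((c ^ (-s) - c ^ (-1:ℝ))) = c ^ (-1:ℝ) - c ^ (-s) := by ring
        _ ≤ (s-1) * (Real.log c * c ^ (-1:ℝ)) := hkey
        _ = Real.log c * c ^ (-1:ℝ) * (s-1) := by ring
    · exact integrableOn_L
    · filter_upwards with u
      exact rpow_slope (by positivity)
  refine hmain.congr' ?_
  filter_upwards [self_mem_nhdsWithin] with s hs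
  have hs1 : (1:ℝ) < s := hs
  rw [show K s - K 1 = ∫ u in Ioi (0:ℝ), ((1+u^2)^(-s) - (1+u^2)^(-(1:ℝ))) from ?_,
    ← integral_div]
  rw [K, K, ← integral_sub (integrableOn_K hs1.le) (integrableOn_K le_rfl)]

/-! ### ζ(σ) − 1/(σ−1) → γ (real version) -/

lemma zR_gamma : Tendsto (fun σ : ℝ => zR σ - 1/(σ-1)) (𝓝[>] 1)
    (𝓝 Real.eulerMascheroniConstant) := by
  have h1 := ZetaAsymptotics.tendsto_riemannZeta_sub_one_div_nhds_right
  have h2 : Tendsto (fun σ : ℝ => (riemannZeta σ - 1 / ((σ:ℂ) - 1)).re) (𝓝[>] 1)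
      (𝓝 Real.eulerMascheroniConstant) := by
    have h3 := (Complex.continuous_re.tendsto ((Real.eulerMascheroniConstant : ℂ))).comp h1
    simpa only [Function.comp_def, Complex.ofReal_re] using h3
  refine h2.congr' ?_
  filter_upwards [self_mem_nhdsWithin] with σ hσ
  have hσ1 : (1:ℝ) < σ := hσ
  have hz : riemannZeta σ = ((zR σ : ℝ) : ℂ) := by
    rw [zeta_eq_tsum_one_div_nat_add_one_cpow (by simpa using hσ1), zR, Complex.ofReal_tsum]
    congr 1
    funext n
    rw [show ((n:ℂ) + 1) = (((n:ℝ) + 1 : ℝ) : ℂ) by push_cast; ring,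
      Complex.ofReal_cpow (by positivity), Complex.ofReal_neg, Complex.cpow_neg, one_div]
  rw [hz, show ((σ:ℂ) - 1) = (((σ - 1 : ℝ)) : ℂ) by push_cast; ring,
    show (1 / (((σ - 1 : ℝ)) : ℂ)) = (((1/(σ-1) : ℝ)) : ℂ) by norm_num,
    ← Complex.ofReal_sub, Complex.ofReal_re]

lemma psi_lim : Tendsto (fun s : ℝ => zR (2*s-1) - 1/(2*s-2)) (𝓝[>] 1)
    (𝓝 Real.eulerMascheroniConstant) := by
  have hcomp : Tendsto (fun s : ℝ => 2*s-1) (𝓝[>] 1) (𝓝[>] 1) := by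
    apply tendsto_nhdsWithin_of_tendsto_nhds_of_eventually_within
    · have : Tendsto (fun s : ℝ => 2*s-1) (𝓝 1) (𝓝 (2*1-1)) := by
        apply Tendsto.sub_const
        exact (continuous_const.mul continuous_id).tendsto 1
      norm_num at this
      exact this.mono_left nhdsWithin_le_nhds
    · filter_upwards [self_mem_nhdsWithin] with s hs
      have : (1:ℝ) < s := hs
      show (1:ℝ) < 2*s-1
      linarith
  have := zR_gamma.comp hcomp
  refine this.congr fun s => ?_
  simp only [Function.comp_apply]
  norm_num
  ring_nf

end TRT

namespace TRT
open Set MeasureTheory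

lemma integrableOn_sq {b s : ℝ} (hb : 1 ≤ b) (hs : 1 ≤ s) :
    IntegrableOn (fun x : ℝ => (b ^ 2 + x ^ 2) ^ (-s)) (Ioi 0) := by
  refine (integrableOn_K hs).mono' ?_ ?_
  · apply Continuous.aestronglyMeasurable
    apply Continuous.rpow_const (by continuity)
    intro x; left; nlinarith
  · filter_upwards with x
    have h1 : (0:ℝ) < 1 + x ^ 2 := by positivity
    rw [Real.norm_eq_abs, abs_of_nonneg (Real.rpow_nonneg (by nlinarith) _)]
    exact rpow_neg_anti h1 (by nlinarith) (by linarith)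

lemma integral_sq_rpow {b : ℝ} (hb : 0 < b) (s : ℝ) :
    ∫ x in Ioi (0:ℝ), (b ^ 2 + x ^ 2) ^ (-s) = b ^ (1 - 2*s) * K s := by
  have h := integral_comp_mul_left_Ioi (g := fun x : ℝ => (b ^ 2 + x ^ 2) ^ (-s)) 0 hb
  rw [mul_zero] at h
  have e : ∀ x : ℝ, 0 < x → (b ^ 2 + (b * x) ^ 2) ^ (-s) = b ^ (-(2*s)) * (1 + x ^ 2) ^ (-s) := by
    intro x hx
    rw [show b ^ 2 + (b * x) ^ 2 = b ^ 2 * (1 + x ^ 2) by ring,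
      Real.mul_rpow (by positivity) (by positivity), sq_rpow hb.le]
  have h2 : ∫ x in Ioi (0:ℝ), (b ^ 2 + (b * x) ^ 2) ^ (-s)
      = b ^ (-(2*s)) * K s := by
    rw [show K s = ∫ u in Ioi (0:ℝ), (1 + u ^ 2) ^ (-s) from rfl, ← integral_const_mul]
    exact setIntegral_congr_fun measurableSet_Ioi fun x hx => e x hx
  rw [h2] at h
  have hb' : b ^ (-(2*s)) * K s = b⁻¹ * ∫ x in Ioi (0:ℝ), (b ^ 2 + x ^ 2) ^ (-s) := by
    simpa [smul_eq_mul] using h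
  have : ∫ x in Ioi (0:ℝ), (b ^ 2 + x ^ 2) ^ (-s) = b * (b ^ (-(2*s)) * K s) := by
    rw [hb']; field_simp
  rw [this, ← mul_assoc]
  congr 1
  rw [show (1 : ℝ) - 2*s = 1 + (-(2*s)) by ring, Real.rpow_add hb, Real.rpow_one]


lemma int_even_hasSum {g : ℤ → ℝ} (hg : ∀ n : ℤ, g (-n) = g n)
    (h : Summable fun n : ℕ => g ((n : ℤ) + 1)) :
    HasSum g (g 0 + 2 * ∑' n : ℕ, g ((n : ℤ) + 1)) := by
  set T := ∑' n : ℕ, g ((n : ℤ) + 1) with hT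
  have h1 : HasSum (fun n : ℕ => g (((n + 1 : ℕ) : ℤ))) T := by
    have e : (fun n : ℕ => g (((n + 1 : ℕ) : ℤ))) = fun n : ℕ => g ((n : ℤ) + 1) := by
      funext n; push_cast; rfl
    rw [e]; exact h.hasSum
  have h2 : HasSum (fun n : ℕ => g (n : ℤ)) (T + g 0) := by
    have := (hasSum_nat_add_iff (f := fun n : ℕ => g (n : ℤ)) 1).mp h1
    simpa using this
  have h3 : HasSum (fun n : ℕ => g (-((n : ℤ) + 1))) T := by
    have e : (fun n : ℕ => g (-((n : ℤ) + 1))) = fun n : ℕ => g ((n : ℤ) + 1) := by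
      funext n; rw [hg]
    rw [e]; exact h.hasSum
  have h4 := h2.of_nat_of_neg_add_one h3
  have : T + g 0 + T = g 0 + 2 * T := by ring
  rwa [this] at h4

lemma int_even_summable {g : ℤ → ℝ} (hg : ∀ n : ℤ, g (-n) = g n)
    (h : Summable fun n : ℕ => g ((n : ℤ) + 1)) : Summable g :=
  (int_even_hasSum hg h).summable

lemma int_even_tsum {g : ℤ → ℝ} (hg : ∀ n : ℤ, g (-n) = g n)
    (h : Summable fun n : ℕ => g ((n : ℤ) + 1)) :
    ∑' n : ℤ, g n = g 0 + 2 * ∑' n : ℕ, g ((n : ℤ) + 1) :=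
  (int_even_hasSum hg h).tsum_eq

lemma summable_aux {c d s : ℝ} (hc : 0 ≤ c) (hd : 0 < d) (hs : 1 < s) :
    Summable fun k : ℕ => (c + d * ((k:ℝ)+1) ^ 2) ^ (-s) := by
  refine Summable.of_nonneg_of_le (fun k => Real.rpow_nonneg (by positivity) _)
    (fun k => ?_) (((summable_shift (σ := 2*s) (by linarith)).mul_left (d ^ (-s))).congr
      (fun k => rfl))
  calc (c + d * ((k:ℝ)+1) ^ 2) ^ (-s) ≤ (d * ((k:ℝ)+1) ^ 2) ^ (-s) := by
        apply rpow_neg_anti (by positivity) (by nlinarith) (by linarith)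
    _ = d ^ (-s) * ((k:ℝ)+1) ^ (-(2*s)) := split_rpow hd.le (by positivity) s
    _ = d ^ (-s) * ((k:ℝ)+1) ^ (-(2*s)) := rfl


lemma inn_sandwich {a s : ℝ} (ha : 0 < a) (hs : 1 ≤ s) (n : ℕ) :
    Summable (fun m : ℕ => (((n : ℝ) + 1) ^ 2 + (((m : ℝ) + 1) * (π / a)) ^ 2) ^ (-s))
    ∧ inn a s n ≤ (a / π) * (((n : ℝ) + 1) ^ (1 - 2*s) * K s)
    ∧ (a / π) * (((n : ℝ) + 1) ^ (1 - 2*s) * K s)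
        ≤ inn a s n + ((n : ℝ) + 1) ^ (-(2*s)) := by
  have hπ := Real.pi_pos
  set b : ℝ := (n : ℝ) + 1 with hb_def
  have hb0 : (0:ℝ) < b := by positivity
  have hb1 : (1:ℝ) ≤ b := by simp [hb_def]
  set r : ℝ := π / a with hr_def
  have hr : 0 < r := by positivity
  set g : ℝ → ℝ := fun x => (b ^ 2 + (x * r) ^ 2) ^ (-s) with hg_def
  have hbase : ∀ x : ℝ, 0 < b ^ 2 + (x * r) ^ 2 := fun x => by positivity
  have hgpos : ∀ x : ℝ, 0 ≤ g x := fun x => Real.rpow_nonneg (hbase x).le _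
  have hganti : AntitoneOn g (Ici 0) := by
    intro x hx y hy hxy
    refine rpow_neg_anti (hbase x) ?_ (by linarith)
    have hx0 : (0:ℝ) ≤ x := hx
    have : (x * r) ^ 2 ≤ (y * r) ^ 2 := by
      apply pow_le_pow_left₀ (mul_nonneg hx0 hr.le) (mul_le_mul_of_nonneg_right hxy hr.le)
    linarith
  have hg_int : IntegrableOn g (Ioi 0) := by
    have h := (integrableOn_Ioi_comp_mul_right_iff
      (fun y : ℝ => (b ^ 2 + y ^ 2) ^ (-s)) 0 hr).mpr
    rw [zero_mul] at h
    exact h (integrableOn_sq hb1 hs)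
  have hIval : ∫ x in Ioi (0:ℝ), g x = r⁻¹ * (b ^ (1 - 2*s) * K s) := by
    have h := integral_comp_mul_right_Ioi (fun y : ℝ => (b ^ 2 + y ^ 2) ^ (-s)) 0 hr
    rw [zero_mul, integral_sq_rpow hb0 s, smul_eq_mul] at h
    exact h
  -- summability of the shifted sequence
  have hbound : ∀ m : ℕ, g ((m+1 : ℕ) : ℝ) ≤ r⁻¹ ^ 2 * (((m:ℝ)+1) ^ 2)⁻¹ := by
    intro m
    have hX : (1:ℝ) ≤ b ^ 2 + (((m+1:ℕ):ℝ) * r) ^ 2 := by nlinarith [sq_nonneg (((m+1:ℕ):ℝ) * r)]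
    have h1 : g ((m+1:ℕ):ℝ) ≤ (b ^ 2 + (((m+1:ℕ):ℝ) * r) ^ 2)⁻¹ := by
      rw [hg_def]
      calc (b ^ 2 + (((m+1:ℕ):ℝ) * r) ^ 2) ^ (-s)
          ≤ (b ^ 2 + (((m+1:ℕ):ℝ) * r) ^ 2) ^ (-1:ℝ) :=
            Real.rpow_le_rpow_of_exponent_le hX (by linarith)
        _ = (b ^ 2 + (((m+1:ℕ):ℝ) * r) ^ 2)⁻¹ := Real.rpow_neg_one _
    refine h1.trans ?_
    have h2 : ((((m:ℝ)+1) * r) ^ 2) ≤ b ^ 2 + (((m+1:ℕ):ℝ) * r) ^ 2 := by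
      push_cast
      nlinarith [sq_nonneg b, hb0]
    have h3 : (0:ℝ) < (((m:ℝ)+1) * r) ^ 2 := by positivity
    calc (b ^ 2 + (((m+1:ℕ):ℝ) * r) ^ 2)⁻¹ ≤ ((((m:ℝ)+1) * r) ^ 2)⁻¹ := by
          apply inv_anti₀ h3 h2
      _ = r⁻¹ ^ 2 * (((m:ℝ)+1) ^ 2)⁻¹ := by
          rw [mul_pow]
          field_simp
  have hsummable_bound : Summable fun m : ℕ => r⁻¹ ^ 2 * (((m:ℝ)+1) ^ 2)⁻¹ := by
    apply Summable.mul_left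
    refine (summable_shift (σ := 2) one_lt_two).congr fun m => ?_
    rw [Real.rpow_neg (by positivity), Real.rpow_two]
  have hsum' : Summable fun m : ℕ => g ((m+1 : ℕ) : ℝ) :=
    Summable.of_nonneg_of_le (fun m => hgpos _) hbound hsummable_bound
  have hsum0 : Summable fun m : ℕ => g (m : ℝ) :=
    (summable_nat_add_iff (f := fun m : ℕ => g (m : ℝ)) 1).mp hsum'
  -- partial sums vs integrals
  have low : ∀ N : ℕ, ∑ i ∈ Finset.range N, g ((i+1 : ℕ) : ℝ) ≤ ∫ x in (0:ℝ)..(N:ℝ), g x := by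
    intro N
    have h := AntitoneOn.sum_le_integral (x₀ := 0) (a := N) (f := g)
      (hganti.mono (by intro x hx; exact (mem_Icc.mp hx).1))
    simpa using h
  have upp : ∀ N : ℕ, ∫ x in (0:ℝ)..(N:ℝ), g x ≤ ∑ i ∈ Finset.range N, g (i : ℝ) := by
    intro N
    have h := AntitoneOn.integral_le_sum (x₀ := 0) (a := N) (f := g)
      (hganti.mono (by intro x hx; exact (mem_Icc.mp hx).1))
    simpa using h
  have hT1 : Tendsto (fun N : ℕ => ∑ i ∈ Finset.range N, g ((i+1 : ℕ) : ℝ)) atTop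
      (𝓝 (∑' m : ℕ, g ((m+1 : ℕ) : ℝ))) := hsum'.hasSum.tendsto_sum_nat
  have hT2 : Tendsto (fun N : ℕ => ∫ x in (0:ℝ)..(N:ℝ), g x) atTop
      (𝓝 (∫ x in Ioi (0:ℝ), g x)) :=
    intervalIntegral_tendsto_integral_Ioi 0 hg_int tendsto_natCast_atTop_atTop
  have hT3 : Tendsto (fun N : ℕ => ∑ i ∈ Finset.range N, g (i : ℝ)) atTop
      (𝓝 (∑' m : ℕ, g (m : ℝ))) := hsum0.hasSum.tendsto_sum_nat
  have hAI : (∑' m : ℕ, g ((m+1 : ℕ) : ℝ)) ≤ ∫ x in Ioi (0:ℝ), g x :=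
    le_of_tendsto_of_tendsto' hT1 hT2 low
  have hIA : (∫ x in Ioi (0:ℝ), g x) ≤ ∑' m : ℕ, g (m : ℝ) :=
    le_of_tendsto_of_tendsto' hT2 hT3 upp
  have htsum0 : ∑' m : ℕ, g (m : ℝ) = g 0 + ∑' m : ℕ, g ((m+1 : ℕ) : ℝ) := by
    rw [hsum0.tsum_eq_zero_add]
    norm_num
  have hg0 : g (0 : ℝ) = b ^ (-(2*s)) := by
    rw [hg_def]
    norm_num
    rw [sq_rpow hb0.le]
  have hinn : inn a s n = ∑' m : ℕ, g ((m+1 : ℕ) : ℝ) := by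
    rw [inn]
    congr 1
    funext m
    rw [hg_def]
    simp only [hb_def, hr_def]
    push_cast
    ring_nf
  have hsummable_inn : Summable (fun m : ℕ =>
      (((n : ℝ) + 1) ^ 2 + (((m : ℝ) + 1) * (π / a)) ^ 2) ^ (-s)) := by
    refine hsum'.congr fun m => ?_
    rw [hg_def]
    simp only [hb_def, hr_def]
    push_cast
    ring_nf
  have hrinv : r⁻¹ = a / π := by rw [hr_def, inv_div]
  refine ⟨hsummable_inn, ?_, ?_⟩
  · rw [hinn, ← hrinv, ← hIval]; exact hAI
  · rw [hinn, ← hrinv, ← hIval, ← hg0]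
    calc ∫ x in Ioi (0:ℝ), g x ≤ ∑' m : ℕ, g (m : ℝ) := hIA
      _ = g 0 + ∑' m : ℕ, g ((m+1 : ℕ) : ℝ) := htsum0
      _ = (∑' m : ℕ, g ((m+1 : ℕ) : ℝ)) + g 0 := by ring


lemma inn_nonneg (a s : ℝ) (n : ℕ) : 0 ≤ inn a s n :=
  tsum_nonneg fun m => Real.rpow_nonneg (by positivity) _

lemma summable_inn {a s : ℝ} (ha : 0 < a) (hs : 1 < s) :
    Summable fun n : ℕ => inn a s n := by
  refine Summable.of_nonneg_of_le (fun n => inn_nonneg a s n)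
    (fun n => (inn_sandwich ha hs.le n).2.1) ?_
  have h1 : Summable fun n : ℕ => ((n:ℝ)+1) ^ (-(2*s-1)) := summable_shift (by linarith)
  refine (h1.mul_left ((a/π) * K s)).congr fun n => ?_
  rw [show -(2*s-1) = 1 - 2*s by ring]
  ring

noncomputable def fa (a s : ℝ) : ℤ × ℤ → ℝ := fun p => lam a p ^ (-s)

noncomputable def Gx (a s : ℝ) (x : ℤ) : ℝ := ∑' y : ℤ, fa a s (y, x)

lemma decomposition {a s : ℝ} (ha : 0 < a) (hs : 1 < s) :
    Za a s = 2*((4*π^3/a)^(-s) * zR (2*s)) + 2*((4*π*a)^(-s) * zR (2*s))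
      + 4*((4*π*a)^(-s) * ∑' n : ℕ, inn a s n) := by
  have hπ := Real.pi_pos
  have hs0 : s ≠ 0 := by linarith
  have hc1 : (0:ℝ) < 4*π^3/a := by positivity
  have hc2 : (0:ℝ) < 4*π*a := by positivity
  -- step a
  have hstep : Za a s = ∑' p : ℤ × ℤ, fa a s p := by
    rw [Za, show (∑' p : {p : ℤ × ℤ // p ≠ 0}, lam a p.1 ^ (-s))
      = ∑' p : ({p : ℤ × ℤ | p ≠ 0} : Set (ℤ × ℤ)), fa a s p.1 from rfl,
      tsum_subtype ({p : ℤ × ℤ | p ≠ 0} : Set (ℤ × ℤ)) (fa a s)]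
    apply tsum_congr
    intro p
    by_cases hp : p = 0
    · subst hp
      simp [Set.indicator, fa, lam, Real.zero_rpow (neg_ne_zero.mpr hs0)]
    · simp [Set.indicator, hp]
  -- evenness in the first coordinate
  have heven1 : ∀ x y : ℤ, fa a s (-y, x) = fa a s (y, x) := by
    intro x y; simp [fa, lam]
  -- inner summability
  have hinner : ∀ x : ℤ, Summable fun y : ℤ => fa a s (y, x) := by
    intro x
    apply int_even_summable (fun y => heven1 x y)
    have h := summable_aux (c := 4*π*a*(x:ℝ)^2) (d := 4*π^3/a) (by positivity) hc1 hs
    refine h.congr fun m => ?_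
    show _ = fa a s ((m:ℤ)+1, x)
    simp only [fa, lam]
    congr 1
    push_cast
    ring
  -- quadrant term
  have hquad : ∀ m n : ℕ, fa a s ((m:ℤ)+1, (n:ℤ)+1)
      = (4*π*a)^(-s) * ((((n:ℝ)+1)^2 + (((m:ℝ)+1)*(π/a))^2) ^ (-s)) := by
    intro m n
    have hbase : lam a ((m:ℤ)+1, (n:ℤ)+1)
        = (4*π*a) * ((((n:ℝ)+1)^2 + (((m:ℝ)+1)*(π/a))^2)) := by
      simp only [lam]
      push_cast
      field_simp [ha.ne']
      ring
    rw [fa, hbase, Real.mul_rpow hc2.le (by positivity)]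
  -- G at positive integers
  have hGsucc : ∀ n : ℕ, Gx a s ((n:ℤ)+1)
      = (4*π*a)^(-s) * ((n:ℝ)+1)^(-(2*s)) + 2*((4*π*a)^(-s) * inn a s n) := by
    intro n
    have heven : ∀ y : ℤ, (fun y : ℤ => fa a s (y, (n:ℤ)+1)) (-y)
        = (fun y : ℤ => fa a s (y, (n:ℤ)+1)) y := fun y => heven1 _ y
    have hsumnat : Summable fun m : ℕ => fa a s ((m:ℤ)+1, (n:ℤ)+1) := by
      have h := summable_aux (c := 4*π*a*(((n:ℝ)+1))^2) (d := 4*π^3/a) (by positivity) hc1 hs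
      refine h.congr fun m => ?_
      simp only [fa, lam]
      congr 1
      push_cast
      ring
    have e1 : Gx a s ((n:ℤ)+1)
        = fa a s (0, (n:ℤ)+1) + 2 * ∑' m : ℕ, fa a s ((m:ℤ)+1, (n:ℤ)+1) :=
      int_even_tsum (g := fun y : ℤ => fa a s (y, (n:ℤ)+1)) heven hsumnat
    rw [e1]
    have h0 : fa a s (0, (n:ℤ)+1) = (4*π*a)^(-s) * ((n:ℝ)+1)^(-(2*s)) := by
      have hb : lam a (0, (n:ℤ)+1) = (4*π*a) * ((n:ℝ)+1)^2 := by
        simp only [lam]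
        push_cast
        ring
      rw [fa, hb, split_rpow hc2.le (by positivity)]
    have h1 : (∑' m : ℕ, fa a s ((m:ℤ)+1, (n:ℤ)+1)) = (4*π*a)^(-s) * inn a s n := by
      rw [inn, ← tsum_mul_left]
      apply tsum_congr
      intro m
      exact hquad m n
    rw [h0, h1]
  -- G at 0
  have hG0 : Gx a s 0 = 2*((4*π^3/a)^(-s) * zR (2*s)) := by
    have heven : ∀ y : ℤ, (fun y : ℤ => fa a s (y, 0)) (-y)
        = (fun y : ℤ => fa a s (y, 0)) y := fun y => heven1 _ y
    have hterm : ∀ m : ℕ, fa a s ((m:ℤ)+1, 0) = (4*π^3/a)^(-s) * ((m:ℝ)+1)^(-(2*s)) := by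
      intro m
      have hb : lam a ((m:ℤ)+1, 0) = (4*π^3/a) * ((m:ℝ)+1)^2 := by
        simp only [lam]
        push_cast
        ring
      rw [fa, hb, split_rpow hc1.le (by positivity)]
    have hsumnat : Summable fun m : ℕ => fa a s ((m:ℤ)+1, 0) := by
      refine ((summable_shift (σ := 2*s) (by linarith)).mul_left ((4*π^3/a)^(-s))).congr
        fun m => ?_
      rw [hterm m]
    have e1 : Gx a s 0 = fa a s (0, 0) + 2 * ∑' m : ℕ, fa a s ((m:ℤ)+1, 0) :=
      int_even_tsum (g := fun y : ℤ => fa a s (y, 0)) heven hsumnat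
    rw [e1]
    have h00 : fa a s (0, 0) = 0 := by
      simp [fa, lam, Real.zero_rpow (neg_ne_zero.mpr hs0)]
    rw [h00, zero_add]
    congr 1
    rw [zR, ← tsum_mul_left]
    exact tsum_congr hterm
  -- evenness of G
  have hGeven : ∀ x : ℤ, Gx a s (-x) = Gx a s x := by
    intro x
    apply tsum_congr
    intro y
    simp [fa, lam]
  -- summability of shifted G
  have hGsumnat : Summable fun n : ℕ => Gx a s ((n:ℤ)+1) := by
    have h1 : Summable fun n : ℕ => (4*π*a)^(-s) * ((n:ℝ)+1)^(-(2*s)) :=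
      (summable_shift (σ := 2*s) (by linarith)).mul_left _
    have h2 : Summable fun n : ℕ => 2*((4*π*a)^(-s) * inn a s n) :=
      ((summable_inn ha hs).mul_left ((4*π*a)^(-s))).mul_left 2
    refine (h1.add h2).congr fun n => (hGsucc n).symm
  -- full summability
  have hfnn : ∀ p : ℤ × ℤ, 0 ≤ fa a s p := by
    intro p
    apply Real.rpow_nonneg
    unfold lam
    have h1 : (0:ℝ) ≤ 4 * π ^ 3 * ((p.1:ℝ)) ^ 2 / a := by positivity
    nlinarith [sq_nonneg ((p.2:ℝ)), hπ, ha]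
  have hF : Summable (fun q : ℤ × ℤ => fa a s (q.2, q.1)) := by
    have hnn : (0 : ℤ × ℤ → ℝ) ≤ (fun q : ℤ × ℤ => fa a s (q.2, q.1)) := fun q => hfnn _
    rw [summable_prod_of_nonneg hnn]
    exact ⟨fun x => hinner x, int_even_summable hGeven hGsumnat⟩
  -- chain
  have hswap : ∑' p : ℤ × ℤ, fa a s p = ∑' q : ℤ × ℤ, fa a s (q.2, q.1) := by
    exact ((Equiv.prodComm ℤ ℤ).tsum_eq (fa a s)).symm
  have hfub : ∑' q : ℤ × ℤ, fa a s (q.2, q.1) = ∑' x : ℤ, Gx a s x := by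
    rw [hF.tsum_prod' (fun b => hinner b)]
    rfl
  have hGdecomp : ∑' x : ℤ, Gx a s x = Gx a s 0 + 2 * ∑' n : ℕ, Gx a s ((n:ℤ)+1) :=
    int_even_tsum hGeven hGsumnat
  have htail : ∑' n : ℕ, Gx a s ((n:ℤ)+1)
      = (4*π*a)^(-s) * zR (2*s) + 2*((4*π*a)^(-s) * ∑' n : ℕ, inn a s n) := by
    rw [tsum_congr hGsucc, Summable.tsum_add ((summable_shift (σ := 2*s) (by linarith)).mul_left _)
      (((summable_inn ha hs).mul_left ((4*π*a)^(-s))).mul_left 2)]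
    rw [tsum_mul_left, tsum_mul_left, tsum_mul_left, zR]
  rw [hstep, hswap, hfub, hGdecomp, hG0, htail]
  ring


end TRT

namespace TRT
open Set MeasureTheory

lemma eps_bounds {a s : ℝ} (ha : 0 < a) (hs : 1 ≤ s) (n : ℕ) :
    0 ≤ eps a s n ∧ eps a s n ≤ ((n:ℝ)+1) ^ (-(2*s)) := by
  have h := inn_sandwich ha hs n
  constructor
  · rw [eps]; linarith [h.2.1]
  · rw [eps]; linarith [h.2.2]

lemma eps_le_sq {a s : ℝ} (ha : 0 < a) (hs : 1 ≤ s) (n : ℕ) :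
    eps a s n ≤ ((n:ℝ)+1) ^ (-(2:ℝ)) := by
  refine (eps_bounds ha hs n).2.trans ?_
  apply Real.rpow_le_rpow_of_exponent_le (by push_cast; linarith [Nat.cast_nonneg (α := ℝ) n])
  linarith

lemma summable_eps {a s : ℝ} (ha : 0 < a) (hs : 1 ≤ s) :
    Summable fun n : ℕ => eps a s n :=
  Summable.of_nonneg_of_le (fun n => (eps_bounds ha hs n).1)
    (fun n => eps_le_sq ha hs n) (summable_shift one_lt_two)

lemma Ea_le {a s : ℝ} (ha : 0 < a) (hs : 1 ≤ s) : Ea a s ≤ zR 2 := by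
  rw [Ea, zR]
  exact Summable.tsum_le_tsum (fun n => eps_le_sq ha hs n) (summable_eps ha hs)
    (summable_shift one_lt_two)

lemma Ea_nonneg {a s : ℝ} (ha : 0 < a) (hs : 1 ≤ s) : 0 ≤ Ea a s :=
  tsum_nonneg fun n => (eps_bounds ha hs n).1

lemma tsum_inn_eq {a s : ℝ} (ha : 0 < a) (hs : 1 < s) :
    (∑' n : ℕ, inn a s n) = (a/π) * K s * zR (2*s-1) - Ea a s := by
  have hπ := Real.pi_pos
  have h1 : Summable (fun n : ℕ => (a/π) * (((n:ℝ)+1) ^ (1-2*s) * K s)) := by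
    refine ((summable_shift (σ := 2*s-1) (by linarith)).mul_left ((a/π) * K s)).congr
      fun n => ?_
    rw [show -(2*s-1) = 1 - 2*s by ring]
    ring
  have h2 := summable_eps ha hs.le
  have he : ∀ n : ℕ, inn a s n = (a/π) * (((n:ℝ)+1) ^ (1-2*s) * K s) - eps a s n := by
    intro n; rw [eps]; ring
  rw [tsum_congr he, Summable.tsum_sub h1 h2, Ea]
  congr 1
  rw [zR, ← tsum_mul_left]
  apply tsum_congr
  intro n
  rw [show -(2*s-1) = 1 - 2*s by ring]
  ring

/-! ### Continuity in `s` via Tannery -/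

lemma zR2s_cont : Tendsto (fun s : ℝ => zR (2*s)) (𝓝[>] 1) (𝓝 (zR 2)) := by
  have h := tendsto_tsum_of_dominated_convergence
    (f := fun (s : ℝ) (n : ℕ) => ((n:ℝ)+1) ^ (-(2*s)))
    (g := fun n : ℕ => ((n:ℝ)+1) ^ (-(2:ℝ)))
    (bound := fun n : ℕ => ((n:ℝ)+1) ^ (-(2:ℝ)))
    (𝓕 := 𝓝[>] 1) (summable_shift one_lt_two) ?_ ?_
  · exact h
  · intro n
    have hc : (0:ℝ) < (n:ℝ)+1 := by positivity
    have hcont : Continuous fun s : ℝ => ((n:ℝ)+1) ^ (-(2*s)) :=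
      (continuous_const_rpow hc).comp (by continuity)
    have := (hcont.tendsto 1).mono_left (nhdsWithin_le_nhds (s := Ioi (1:ℝ)))
    norm_num at this ⊢
    exact this
  · filter_upwards [self_mem_nhdsWithin] with s hs
    intro n
    have hs1 : (1:ℝ) < s := hs
    have hc : (1:ℝ) ≤ (n:ℝ)+1 := by push_cast; linarith [Nat.cast_nonneg (α := ℝ) n]
    rw [Real.norm_eq_abs, abs_of_nonneg (Real.rpow_nonneg (by positivity) _)]
    apply Real.rpow_le_rpow_of_exponent_le hc
    linarith

lemma inn_cont {a : ℝ} (ha : 0 < a) (n : ℕ) :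
    Tendsto (fun s : ℝ => inn a s n) (𝓝[>] 1) (𝓝 (inn a 1 n)) := by
  have hπ := Real.pi_pos
  have h := tendsto_tsum_of_dominated_convergence
    (f := fun (s : ℝ) (m : ℕ) =>
      (((n : ℝ) + 1) ^ 2 + (((m : ℝ) + 1) * (π / a)) ^ 2) ^ (-s))
    (g := fun m : ℕ =>
      (((n : ℝ) + 1) ^ 2 + (((m : ℝ) + 1) * (π / a)) ^ 2) ^ (-(1:ℝ)))
    (bound := fun m : ℕ => (π/a)⁻¹ ^ 2 * (((m:ℝ)+1) ^ 2)⁻¹)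
    (𝓕 := 𝓝[>] 1) ?_ ?_ ?_
  · exact h
  · apply Summable.mul_left
    refine (summable_shift (σ := 2) one_lt_two).congr fun m => ?_
    rw [Real.rpow_neg (by positivity), Real.rpow_two]
  · intro m
    exact tendsto_c_rpow_neg (by positivity)
  · filter_upwards [self_mem_nhdsWithin] with s hs
    intro m
    have hs1 : (1:ℝ) < s := hs
    set X : ℝ := ((n : ℝ) + 1) ^ 2 + (((m : ℝ) + 1) * (π / a)) ^ 2 with hX_def
    have hX1 : (1:ℝ) ≤ X := by
      rw [hX_def]
      have h1 : (1:ℝ) ≤ ((n:ℝ)+1) ^ 2 := by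
        have : (1:ℝ) ≤ (n:ℝ)+1 := by linarith [Nat.cast_nonneg (α := ℝ) n]
        nlinarith
      nlinarith [sq_nonneg (((m : ℝ) + 1) * (π / a))]
    have hX0 : (0:ℝ) < X := by linarith
    rw [Real.norm_eq_abs, abs_of_nonneg (Real.rpow_nonneg hX0.le _)]
    calc X ^ (-s) ≤ X ^ (-1:ℝ) :=
          Real.rpow_le_rpow_of_exponent_le hX1 (by linarith)
      _ = X⁻¹ := Real.rpow_neg_one X
      _ ≤ ((((m:ℝ)+1) * (π/a)) ^ 2)⁻¹ := by
          apply inv_anti₀ (by positivity)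
          nlinarith [sq_nonneg ((n:ℝ)+1)]
      _ = (π/a)⁻¹ ^ 2 * (((m:ℝ)+1) ^ 2)⁻¹ := by
          rw [mul_pow]
          field_simp

lemma eps_cont {a : ℝ} (ha : 0 < a) (n : ℕ) :
    Tendsto (fun s : ℝ => eps a s n) (𝓝[>] 1) (𝓝 (eps a 1 n)) := by
  have hπ := Real.pi_pos
  have hb : (0:ℝ) < (n:ℝ)+1 := by positivity
  have h1 : Tendsto (fun s : ℝ => ((n:ℝ)+1) ^ (1-2*s)) (𝓝[>] 1)
      (𝓝 (((n:ℝ)+1) ^ (1-2*(1:ℝ)))) := by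
    have hcont : Continuous fun s : ℝ => ((n:ℝ)+1) ^ (1-2*s) :=
      (continuous_const_rpow hb).comp (by continuity)
    exact (hcont.tendsto 1).mono_left nhdsWithin_le_nhds
  have h2 : Tendsto (fun s : ℝ => (a/π) * (((n:ℝ)+1) ^ (1-2*s) * K s)) (𝓝[>] 1)
      (𝓝 ((a/π) * (((n:ℝ)+1) ^ (1-2*(1:ℝ)) * K 1))) :=
    (h1.mul K_cont).const_mul (a/π)
  exact h2.sub (inn_cont ha n)

lemma Ea_cont {a : ℝ} (ha : 0 < a) :
    Tendsto (fun s : ℝ => Ea a s) (𝓝[>] 1) (𝓝 (Ea a 1)) := by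
  have h := tendsto_tsum_of_dominated_convergence
    (f := fun (s : ℝ) (n : ℕ) => eps a s n)
    (g := fun n : ℕ => eps a 1 n)
    (bound := fun n : ℕ => ((n:ℝ)+1) ^ (-(2:ℝ)))
    (𝓕 := 𝓝[>] 1) (summable_shift one_lt_two) (fun n => eps_cont ha n) ?_
  · exact h
  · filter_upwards [self_mem_nhdsWithin] with s hs
    intro n
    have hs1 : (1:ℝ) < s := hs
    rw [Real.norm_eq_abs, abs_of_nonneg (eps_bounds ha hs1.le n).1]
    exact eps_le_sq ha hs1.le n

end TRT

namespace TRT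
open Set MeasureTheory

noncomputable def Zt0 (a : ℝ) : ℝ :=
  2*((4*π^3/a)^(-(1:ℝ)) * zR 2) + 2*((4*π*a)^(-(1:ℝ)) * zR 2)
    - 4*((4*π*a)^(-(1:ℝ)) * Ea a 1)
    + 2*(2*a/π*((4*π*a)^(-(1:ℝ))*K 1)) * Real.eulerMascheroniConstant
    + 2*a/π*((4*π*a)^(-(1:ℝ))*KD + K 1*(-Real.log (4*π*a) * (4*π*a)^(-(1:ℝ))))

lemma master_identity {a s : ℝ} (ha : 0 < a) (hs : 1 < s) :
    Za a s - 1 / (4*π*(s-1))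
      = 2*((4*π^3/a)^(-s) * zR (2*s)) + 2*((4*π*a)^(-s) * zR (2*s))
        - 4*((4*π*a)^(-s) * Ea a s)
        + 2*(2*a/π*((4*π*a)^(-s)*K s)) * (zR (2*s-1) - 1/(2*s-2))
        + 2*a/π*((4*π*a)^(-s)*((K s - K 1)/(s-1))
            + K 1*(((4*π*a)^(-s) - (4*π*a)^(-(1:ℝ)))/(s-1))) := by
  have hπ := Real.pi_pos
  have hs1 : s - 1 ≠ 0 := by intro h; nlinarith
  have hs2 : 2*s - 2 ≠ 0 := by intro h; apply hs1; linarith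
  rw [decomposition ha hs, tsum_inn_eq ha hs, K_one, Real.rpow_neg_one]
  field_simp
  ring

lemma part1 {a : ℝ} (ha : 0 < a) :
    Tendsto (fun s : ℝ => Za a s - 1 / (4 * π * (s - 1))) (𝓝[>] 1) (𝓝 (Zt0 a)) := by
  have hπ := Real.pi_pos
  have hc1 : (0:ℝ) < 4*π^3/a := by positivity
  have hc2 : (0:ℝ) < 4*π*a := by positivity
  have P1 := ((tendsto_c_rpow_neg hc1).mul zR2s_cont).const_mul 2
  have P2 := ((tendsto_c_rpow_neg hc2).mul zR2s_cont).const_mul 2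
  have P3 := ((tendsto_c_rpow_neg hc2).mul (Ea_cont ha)).const_mul 4
  have P4 := ((((tendsto_c_rpow_neg hc2).mul K_cont).const_mul (2*a/π)).const_mul 2).mul
    psi_lim
  have P5 := (((tendsto_c_rpow_neg hc2).mul K_slope).add
    ((rpow_slope hc2).const_mul (K 1))).const_mul (2*a/π)
  have PT := (((P1.add P2).sub P3).add P4).add P5
  refine Tendsto.congr' ?_ PT
  filter_upwards [self_mem_nhdsWithin] with s hs
  exact (master_identity ha hs).symm

end TRT

namespace TRT
open Set MeasureTheory

lemma h4pa : Tendsto (fun a : ℝ => 4*π*a) atTop atTop := by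
  apply Tendsto.const_mul_atTop (by positivity : (0:ℝ) < 4*π) tendsto_id

lemma hloginv : Tendsto (fun x : ℝ => Real.log x * x⁻¹) atTop (𝓝 0) := by
  have := Real.isLittleO_log_id_atTop.tendsto_div_nhds_zero
  refine this.congr fun x => ?_
  rw [div_eq_mul_inv]
  rfl

lemma hinv4 : Tendsto (fun a : ℝ => (4*π*a)⁻¹) atTop (𝓝 0) :=
  tendsto_inv_atTop_zero.comp h4pa

lemma hlog4 : Tendsto (fun a : ℝ => Real.log (4*π*a) * (4*π*a)⁻¹) atTop (𝓝 0) :=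
  hloginv.comp h4pa

lemma hR3 : Tendsto (fun a : ℝ => 4*((4*π*a)^(-(1:ℝ)) * Ea a 1)/a) atTop (𝓝 0) := by
  have hπ := Real.pi_pos
  apply squeeze_zero' (g := fun a : ℝ => (zR 2/π) * (a⁻¹*a⁻¹))
  · filter_upwards [eventually_gt_atTop 0] with a ha
    have h1 : 0 ≤ Ea a 1 := Ea_nonneg ha le_rfl
    have h2 : 0 ≤ (4*π*a) ^ (-(1:ℝ)) := Real.rpow_nonneg (by positivity) _
    positivity
  · filter_upwards [eventually_gt_atTop 0] with a ha
    have h1 : Ea a 1 ≤ zR 2 := Ea_le ha le_rfl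
    have h0 : 0 ≤ Ea a 1 := Ea_nonneg ha le_rfl
    rw [Real.rpow_neg_one]
    have hle : 4*((4*π*a)⁻¹ * Ea a 1)/a ≤ 4*((4*π*a)⁻¹ * zR 2)/a := by
      gcongr
    refine hle.trans_eq ?_
    field_simp
  · have h := (tendsto_inv_atTop_zero.mul tendsto_inv_atTop_zero).const_mul (zR 2/π)
    rw [show (zR 2/π) * ((0:ℝ)*0) = 0 by ring] at h
    exact h

lemma part2 : Tendsto (fun a : ℝ => Zt0 a / a) atTop (𝓝 (1/(12*π))) := by
  have hπ := Real.pi_pos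
  have hdecomp : (fun a : ℝ => Zt0 a / a) = fun a : ℝ =>
      2*((4*π^3/a)^(-(1:ℝ)) * zR 2)/a + 2*((4*π*a)^(-(1:ℝ)) * zR 2)/a
      - 4*((4*π*a)^(-(1:ℝ)) * Ea a 1)/a
      + 2*(2*a/π*((4*π*a)^(-(1:ℝ))*K 1)) * Real.eulerMascheroniConstant/a
      + 2*a/π*((4*π*a)^(-(1:ℝ))*KD + K 1*(-Real.log (4*π*a) * (4*π*a)^(-(1:ℝ))))/a := by
    funext a
    rw [Zt0]
    ring
  rw [hdecomp]
  have hT1 : Tendsto (fun a : ℝ => 2*((4*π^3/a)^(-(1:ℝ)) * zR 2)/a) atTop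
      (𝓝 (1/(12*π))) := by
    refine Tendsto.congr' ?_ (tendsto_const_nhds (x := (1:ℝ)/(12*π)))
    filter_upwards [eventually_gt_atTop 0] with a ha
    rw [Real.rpow_neg_one, zR_two]
    field_simp
    ring
  have hT2 : Tendsto (fun a : ℝ => 2*((4*π*a)^(-(1:ℝ)) * zR 2)/a) atTop (𝓝 0) := by
    have hbase : Tendsto (fun a : ℝ => (zR 2/(2*π)) * (a⁻¹*a⁻¹)) atTop (𝓝 0) := by
      have h := (tendsto_inv_atTop_zero.mul tendsto_inv_atTop_zero).const_mul (zR 2/(2*π))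
      rw [show (zR 2/(2*π)) * ((0:ℝ)*0) = 0 by ring] at h
      exact h
    refine hbase.congr' ?_
    filter_upwards [eventually_gt_atTop 0] with a ha
    rw [Real.rpow_neg_one]
    field_simp
    ring
  have hT4 : Tendsto (fun a : ℝ =>
      2*(2*a/π*((4*π*a)^(-(1:ℝ))*K 1)) * Real.eulerMascheroniConstant/a) atTop (𝓝 0) := by
    have hbase : Tendsto (fun a : ℝ =>
        (K 1 * Real.eulerMascheroniConstant/π^2) * a⁻¹) atTop (𝓝 0) := by
      have h := tendsto_inv_atTop_zero.const_mul (K 1 * Real.eulerMascheroniConstant/π^2)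
      rw [show (K 1 * Real.eulerMascheroniConstant/π^2) * (0:ℝ) = 0 by ring] at h
      exact h
    refine hbase.congr' ?_
    filter_upwards [eventually_gt_atTop 0] with a ha
    rw [Real.rpow_neg_one]
    field_simp
    ring
  have hT5 : Tendsto (fun a : ℝ =>
      2*a/π*((4*π*a)^(-(1:ℝ))*KD + K 1*(-Real.log (4*π*a) * (4*π*a)^(-(1:ℝ))))/a) atTop
      (𝓝 0) := by
    have hbase : Tendsto (fun a : ℝ =>
        (2/π)*((4*π*a)⁻¹*KD + K 1*(-(Real.log (4*π*a) * (4*π*a)⁻¹)))) atTop (𝓝 0) := by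
      have h := ((hinv4.mul_const KD).add ((hlog4.neg).const_mul (K 1))).const_mul
        ((2:ℝ)/π)
      rw [show (2/π)*((0:ℝ)*KD + K 1*(-0)) = 0 by ring] at h
      exact h
    refine hbase.congr' ?_
    filter_upwards [eventually_gt_atTop 0] with a ha
    rw [Real.rpow_neg_one]
    field_simp
  have htot := (((hT1.add hT2).sub hR3).add hT4).add hT5
  rw [show (1:ℝ)/(12*π) + 0 - 0 + 0 + 0 = 1/(12*π) by ring] at htot
  exact htot

end TRT

/-- For every `a > 0` the regularized trace `Z̃_a = lim_{s→1⁺}(Z_a(s) − 1/(4π(s−1)))`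
exists, and it has the leading asymptotic behavior `Z̃_a ∼ a/(12π)` as `a → ∞`. -/
theorem torus_regularized_trace_asymptotics :
    ∃ Zt : ℝ → ℝ,
      (∀ a : ℝ, 0 < a →
        Tendsto (fun s : ℝ => Za a s - 1 / (4 * π * (s - 1))) (𝓝[>] 1) (𝓝 (Zt a))) ∧
      Tendsto (fun a : ℝ => Zt a / a) atTop (𝓝 (1 / (12 * π))) :=
  ⟨TRT.Zt0, fun _ ha => TRT.part1 ha, TRT.part2⟩
end
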